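/- Let c > 0. The equation Δ_p u = c - h e^u has a solution u : V → ℝ if and only if h is positive somewhere on V. -/

import Mathlib

open Finset Real

/-- The discrete `p`-Laplacian on a weighted graph with adjacency `A`,
edge weights `ω` and vertex measure `μ`:
`(Δ_p f)_i = (1/μ_i) Σ_{j ∼ i} ω_{ij} |f_j - f_i|^{p-2} (f_j - f_i)`. -/
noncomputable def pLap {V : Type*} [Fintype V] (p : ℝ) (A : V → V → Prop) [DecidableRel A]
    (ω : V → V → ℝ) (μ : V → ℝ) (f : V → ℝ) : V → ℝ :=
  fun i => (1 / μ i) * ∑ j, if A i j then ω i j * |f j - f i| ^ (p - 2) * (f j - f i) else 0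

/-- Sum of a symmetric function `g` over the (unordered) edges of the graph:
`Σ_{i∼j} g_{ij} = (1/2) Σ_i Σ_{j : A i j} g i j`. -/
noncomputable def edgeSum {V : Type*} [Fintype V] (A : V → V → Prop) [DecidableRel A]
    (g : V → V → ℝ) : ℝ :=
  (1 / 2) * ∑ i, ∑ j, if A i j then g i j else 0

/-!
If `u` solves the equation, multiplying by `μ` and summing kills the `p`-Laplacian (the edge flux
is antisymmetric), so `∑ μ h e^u = c ∑ μ > 0` and `h` must be positive somewhere.

Conversely, minimize `J u = p⁻¹ E u + c ∑ μ u`, with `E` the `p`-Dirichlet energy, on the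
constraint set `∑ μ h e^u = 1`, which is nonempty because `h` is positive somewhere. On that set
`max u ≥ -log ∑ μ h⁺`, and along paths of the connected graph the oscillation of `u` is
`O(E u ^ p⁻¹)`; since `p⁻¹ < 1` this makes the sublevel sets of `J` compact. A Lagrange
multiplier at the minimizer `w` gives `Δ_p w = c - λ h e^w`, integrating shows `λ = c ∑ μ > 0`,
and `w + log λ` solves the equation.
-/

open Filter

lemma hasStrictDerivAt_abs_rpow {p : ℝ} (hp : 1 < p) (x : ℝ) :
    HasStrictDerivAt (fun y : ℝ => |y| ^ p) (p * |x| ^ (p - 2) * x) x := by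
  simpa using (contDiff_norm_rpow hp).contDiffAt.hasStrictDerivAt'
    (hasDerivAt_norm_rpow x hp) one_ne_zero

lemma exists_le_of_le_mul_rpow_add {q : ℝ} (hq₀ : 0 < q) (hq₁ : q < 1) (a b : ℝ) :
    ∃ R, ∀ x, x ≤ a * x ^ q + b → x ≤ R := by
  have hgrowth : Tendsto (fun x : ℝ => x - a * x ^ q) atTop atTop := by
    have hprod := (tendsto_rpow_atTop hq₀).atTop_mul_atTop₀
      (tendsto_atTop_add_const_right _ (-a) (tendsto_rpow_atTop (sub_pos.2 hq₁)))
    refine hprod.congr' ?_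
    filter_upwards [eventually_gt_atTop 0] with x hx
    rw [mul_add, ← Real.rpow_add hx, add_sub_cancel, rpow_one]
    ring
  obtain ⟨R, hR⟩ := (hgrowth.eventually_gt_atTop b).exists_forall_of_atTop
  exact ⟨R, fun x hx => le_of_not_gt fun hRx => by linarith [hR x hRx.le]⟩

lemma sum_sum_mul_sub_of_antisymm {ι : Type*} [Fintype ι] (G : ι → ι → ℝ)
    (hG : ∀ i j, G j i = -G i j) (v : ι → ℝ) :
    ∑ i, ∑ j, G i j * (v j - v i) = -2 * ∑ i, v i * ∑ j, G i j := by
  have hswap : ∑ i, ∑ j, G i j * v j = -∑ i, v i * ∑ j, G i j := by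
    rw [Finset.sum_comm, ← Finset.sum_neg_distrib]
    refine Finset.sum_congr rfl fun j _ => ?_
    rw [Finset.mul_sum, ← Finset.sum_neg_distrib]
    exact Finset.sum_congr rfl fun i _ => by rw [hG j i]; ring
  have hdiag : ∑ i, ∑ j, G i j * v i = ∑ i, v i * ∑ j, G i j := by
    simp only [Finset.mul_sum, mul_comm]
  simp only [mul_sub, Finset.sum_sub_distrib, hswap, hdiag]
  ring

section WeightedGraph

variable {V : Type*} {p : ℝ} {A : V → V → Prop} [DecidableRel A]
  {ω : V → V → ℝ} {μ : V → ℝ} {c : ℝ}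

noncomputable def pFlux (p : ℝ) (A : V → V → Prop) [DecidableRel A] (ω : V → V → ℝ)
    (u : V → ℝ) (i j : V) : ℝ :=
  if A i j then ω i j * |u j - u i| ^ (p - 2) * (u j - u i) else 0

lemma pFlux_swap (hA : Symmetric A) (hω : ∀ i j, ω i j = ω j i) (u : V → ℝ) (i j : V) :
    pFlux p A ω u j i = -pFlux p A ω u i j := by
  by_cases hij : A i j
  · simp [pFlux, hij, hA hij, hω i j, abs_sub_comm (u i)]
    ring
  · simp [pFlux, hij, show ¬A j i from fun hji => hij (hA hji)]

variable [Fintype V]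

lemma mul_pLap {i : V} (hμ : μ i ≠ 0) (u : V → ℝ) :
    μ i * pLap p A ω μ u i = ∑ j, pFlux p A ω u i j := by
  rw [pLap, ← mul_assoc, mul_one_div_cancel hμ, one_mul]
  rfl

lemma sum_mul_pLap (hA : Symmetric A) (hω : ∀ i j, ω i j = ω j i) (hμ : ∀ i, μ i ≠ 0)
    (u : V → ℝ) : ∑ i, μ i * pLap p A ω μ u i = 0 := by
  -- summation by parts against the constant function `1`
  have h := sum_sum_mul_sub_of_antisymm _ (pFlux_swap (p := p) hA hω u) 1
  simp only [Pi.one_apply, sub_self, mul_zero, Finset.sum_const_zero, one_mul] at h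
  simp only [mul_pLap (hμ _)]
  linarith

lemma pLap_add_const (u : V → ℝ) (t : ℝ) :
    pLap p A ω μ (fun i => u i + t) = pLap p A ω μ u := by
  funext i
  simp only [pLap, add_sub_add_right_eq_sub]

noncomputable def expIntegral (μ h u : V → ℝ) : ℝ := ∑ i, μ i * h i * exp (u i)

lemma expIntegral_add_const (μ h u : V → ℝ) (t : ℝ) :
    expIntegral μ h (fun i => u i + t) = exp t * expIntegral μ h u := by
  simp only [expIntegral, Finset.mul_sum, exp_add]
  exact Finset.sum_congr rfl fun _ _ => by ring

lemma expIntegral_eq_of_pLap_eq (hA : Symmetric A) (hω : ∀ i j, ω i j = ω j i)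
    (hμ : ∀ i, μ i ≠ 0) {h u : V → ℝ}
    (hu : ∀ i, pLap p A ω μ u i = c - h i * exp (u i)) :
    expIntegral μ h u = c * ∑ i, μ i := by
  have hterm : ∀ i, μ i * h i * exp (u i) = μ i * c - μ i * pLap p A ω μ u i := fun i => by
    rw [hu]; ring
  rw [expIntegral, Finset.sum_congr rfl fun i _ => hterm i, Finset.sum_sub_distrib,
    sum_mul_pLap hA hω hμ, sub_zero, ← Finset.sum_mul, mul_comm]

lemma exists_pos_of_pLap_eq [Nonempty V] (hA : Symmetric A) (hω : ∀ i j, ω i j = ω j i)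
    (hμ : ∀ i, 0 < μ i) {h u : V → ℝ} (hc : 0 < c)
    (hu : ∀ i, pLap p A ω μ u i = c - h i * exp (u i)) : ∃ i, 0 < h i := by
  by_contra! hh
  have hint := expIntegral_eq_of_pLap_eq hA hω (fun i => (hμ i).ne') hu
  have hle : expIntegral μ h u ≤ 0 := Finset.sum_nonpos fun i _ =>
    mul_nonpos_of_nonpos_of_nonneg (mul_nonpos_of_nonneg_of_nonpos (hμ i).le (hh i)) (exp_pos _).le
  have hpos : 0 < c * ∑ i, μ i := mul_pos hc (Finset.sum_pos (fun i _ => hμ i) univ_nonempty)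
  linarith

noncomputable def pEnergy (p : ℝ) (A : V → V → Prop) [DecidableRel A] (ω : V → V → ℝ)
    (u : V → ℝ) : ℝ :=
  edgeSum A fun i j => ω i j * |u j - u i| ^ p

-- The Kazdan–Warner functional.
noncomputable def kwFunctional (p : ℝ) (A : V → V → Prop) [DecidableRel A] (ω : V → V → ℝ)
    (μ : V → ℝ) (c : ℝ) (u : V → ℝ) : ℝ :=
  p⁻¹ * pEnergy p A ω u + c * ∑ i, μ i * u i

open ContinuousLinearMap in
lemma hasStrictFDerivAt_pEnergy (hp : 1 < p) (hA : Symmetric A) (hω : ∀ i j, ω i j = ω j i)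
    (u : V → ℝ) :
    HasStrictFDerivAt (pEnergy p A ω)
      (-p • ∑ i, (∑ j, pFlux p A ω u i j) • (proj i : (V → ℝ) →L[ℝ] ℝ)) u := by
  have hterm : ∀ i j, HasStrictFDerivAt
      (fun u : V → ℝ => if A i j then ω i j * |u j - u i| ^ p else 0)
      ((p * pFlux p A ω u i j) • ((proj j : (V → ℝ) →L[ℝ] ℝ) - proj i)) u := by
    intro i j
    by_cases hij : A i j
    · simp only [hij, if_true]
      refine (((hasStrictDerivAt_abs_rpow hp _).comp_hasStrictFDerivAt u
        ((proj j : (V → ℝ) →L[ℝ] ℝ) - proj i).hasStrictFDerivAt).const_mul (ω i j)).congr_fderiv ?_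
      ext v
      simp [pFlux, hij]
      ring
    · simpa [hij, pFlux] using hasStrictFDerivAt_const (0 : ℝ) u
  refine ((HasStrictFDerivAt.fun_sum fun i _ => HasStrictFDerivAt.fun_sum fun j _ =>
    hterm i j).const_mul (1 / 2)).congr_fderiv ?_
  ext v
  have hparts := sum_sum_mul_sub_of_antisymm _ (pFlux_swap (p := p) hA hω u) v
  simp only [smul_apply, _root_.sum_apply, sub_apply, proj_apply, smul_eq_mul] at hparts ⊢
  simp only [mul_assoc, ← Finset.mul_sum, hparts, mul_comm (v _)]
  ring

open ContinuousLinearMap in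
lemma hasStrictFDerivAt_kwFunctional (hp : 1 < p) (hA : Symmetric A)
    (hω : ∀ i j, ω i j = ω j i) (hμ : ∀ i, μ i ≠ 0) (u : V → ℝ) :
    HasStrictFDerivAt (kwFunctional p A ω μ c)
      (∑ i, (μ i * (c - pLap p A ω μ u i)) • (proj i : (V → ℝ) →L[ℝ] ℝ)) u := by
  have hlin : HasStrictFDerivAt (fun u : V → ℝ => ∑ i, μ i * u i)
      (∑ i, μ i • (proj i : (V → ℝ) →L[ℝ] ℝ)) u :=
    HasStrictFDerivAt.fun_sum fun i _ => (hasStrictFDerivAt_apply i u).const_mul (μ i)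
  refine (((hasStrictFDerivAt_pEnergy hp hA hω u).const_mul p⁻¹).add
    (hlin.const_mul c)).congr_fderiv ?_
  ext v
  have hp0 : p ≠ 0 := by positivity
  have hterm : ∀ i, μ i * (c - pLap p A ω μ u i) * v i
      = c * (μ i * v i) - (∑ j, pFlux p A ω u i j) * v i := fun i => by
    rw [← mul_pLap (hμ i)]; ring
  simp only [add_apply, smul_apply, _root_.sum_apply, proj_apply, smul_eq_mul, hterm,
    Finset.sum_sub_distrib, ← Finset.mul_sum]
  field_simp
  ring

open ContinuousLinearMap in
lemma hasStrictFDerivAt_expIntegral (μ h u : V → ℝ) :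
    HasStrictFDerivAt (expIntegral μ h)
      (∑ i, (μ i * h i * exp (u i)) • (proj i : (V → ℝ) →L[ℝ] ℝ)) u := by
  refine (HasStrictFDerivAt.fun_sum fun i _ => (hasStrictFDerivAt_apply i u).exp.const_mul
    (μ i * h i)).congr_fderiv ?_
  ext v
  simp [mul_assoc]

lemma edgeSum_nonneg {g : V → V → ℝ} (hg : ∀ i j, A i j → 0 ≤ g i j) : 0 ≤ edgeSum A g :=
  mul_nonneg (by norm_num) (Finset.sum_nonneg fun i _ => Finset.sum_nonneg fun j _ => by
    split_ifs with hij
    exacts [hg i j hij, le_rfl])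

lemma le_two_mul_edgeSum {g : V → V → ℝ} (hg : ∀ i j, A i j → 0 ≤ g i j) {a b : V}
    (hab : A a b) : g a b ≤ 2 * edgeSum A g := by
  have hterm : ∀ i j, 0 ≤ if A i j then g i j else 0 := fun i j => by
    split_ifs with hij
    exacts [hg i j hij, le_rfl]
  calc g a b = if A a b then g a b else 0 := by rw [if_pos hab]
    _ ≤ ∑ j, if A a j then g a j else 0 :=
      Finset.single_le_sum (fun j _ => hterm a j) (Finset.mem_univ b)
    _ ≤ ∑ i, ∑ j, if A i j then g i j else 0 :=
      Finset.single_le_sum (f := fun i => ∑ j, if A i j then g i j else 0)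
        (fun i _ => Finset.sum_nonneg fun j _ => hterm i j) (Finset.mem_univ a)
    _ = 2 * edgeSum A g := by rw [edgeSum]; ring

lemma pEnergy_nonneg (hω : ∀ i j, A i j → 0 ≤ ω i j) (u : V → ℝ) : 0 ≤ pEnergy p A ω u :=
  edgeSum_nonneg fun i j hij => mul_nonneg (hω i j hij) (rpow_nonneg (abs_nonneg _) p)

lemma mul_abs_sub_rpow_le_pEnergy (hω : ∀ i j, A i j → 0 ≤ ω i j) {a b : V} (hab : A a b)
    (u : V → ℝ) : ω a b * |u b - u a| ^ p ≤ 2 * pEnergy p A ω u :=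
  le_two_mul_edgeSum (g := fun i j => ω i j * |u j - u i| ^ p)
    (fun i j hij => mul_nonneg (hω i j hij) (rpow_nonneg (abs_nonneg _) p)) hab

lemma abs_sub_le_of_adj (hp : 0 < p) (hω : ∀ i j, A i j → 0 < ω i j) {a b : V} (hab : A a b)
    (u : V → ℝ) : |u b - u a| ≤ (2 / ω a b) ^ p⁻¹ * pEnergy p A ω u ^ p⁻¹ := by
  have hωab := hω a b hab
  have hE := pEnergy_nonneg (fun i j hij => (hω i j hij).le) (p := p) u
  rw [← mul_rpow (by positivity) hE, le_rpow_inv_iff_of_pos (abs_nonneg _) (by positivity) hp,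
    div_mul_eq_mul_div, le_div_iff₀ hωab, mul_comm]
  exact mul_abs_sub_rpow_le_pEnergy (fun i j hij => (hω i j hij).le) hab u

lemma abs_sub_le_of_reflTransGen (hp : 0 < p) (hω : ∀ i j, A i j → 0 < ω i j) {i j : V}
    (hij : Relation.ReflTransGen A i j) :
    ∃ C, 0 ≤ C ∧ ∀ u : V → ℝ, |u j - u i| ≤ C * pEnergy p A ω u ^ p⁻¹ := by
  induction hij with
  | refl => exact ⟨0, le_rfl, fun u => by simp⟩
  | @tail b e _ hbe ih =>
    obtain ⟨C, hC, hCu⟩ := ih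
    refine ⟨C + (2 / ω b e) ^ p⁻¹, by have := hω b e hbe; positivity, fun u => ?_⟩
    calc |u e - u i| ≤ |u e - u b| + |u b - u i| := abs_sub_le _ _ _
      _ ≤ (2 / ω b e) ^ p⁻¹ * pEnergy p A ω u ^ p⁻¹ + C * pEnergy p A ω u ^ p⁻¹ :=
        add_le_add (abs_sub_le_of_adj hp hω hbe u) (hCu u)
      _ = (C + (2 / ω b e) ^ p⁻¹) * pEnergy p A ω u ^ p⁻¹ := by ring

lemma exists_abs_sub_le_mul_pEnergy_rpow (hp : 0 < p) (hω : ∀ i j, A i j → 0 < ω i j)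
    (hconn : ∀ i j, Relation.ReflTransGen A i j) :
    ∃ C, 0 ≤ C ∧ ∀ (u : V → ℝ) (i j : V), |u j - u i| ≤ C * pEnergy p A ω u ^ p⁻¹ := by
  choose C hC₀ hC using fun i j => abs_sub_le_of_reflTransGen hp hω (hconn i j)
  obtain ⟨M, hM⟩ := Finite.exists_le fun ij : V × V => C ij.1 ij.2
  refine ⟨max M 0, le_max_right _ _, fun u i j => (hC i j u).trans ?_⟩
  exact mul_le_mul_of_nonneg_right ((hM (i, j)).trans (le_max_left _ _))
    (rpow_nonneg (pEnergy_nonneg (fun i j hij => (hω i j hij).le) u) _)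

lemma neg_log_sub_le_of_expIntegral_eq_one (hμ : ∀ i, 0 ≤ μ i) {h u : V → ℝ}
    (hu : expIntegral μ h u = 1) {D : ℝ} (hD : ∀ i j, |u j - u i| ≤ D) (i : V) :
    -log (∑ i, μ i * max (h i) 0) - D ≤ u i := by
  have hV : (Finset.univ : Finset V).Nonempty :=
    Finset.nonempty_of_sum_ne_zero (by rw [← expIntegral, hu]; exact one_ne_zero)
  obtain ⟨k, -, hk⟩ := Finset.exists_max_image Finset.univ u hV
  have hbound : 1 ≤ (∑ i, μ i * max (h i) 0) * exp (u k) := by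
    rw [← hu, expIntegral, Finset.sum_mul]
    refine Finset.sum_le_sum fun i _ => ?_
    rw [mul_assoc, mul_assoc]
    exact mul_le_mul_of_nonneg_left (mul_le_mul (le_max_left _ _)
      (exp_le_exp.2 (hk i (Finset.mem_univ i))) (exp_pos _).le (le_max_right _ _)) (hμ i)
  have hexp : exp (-u k) ≤ ∑ i, μ i * max (h i) 0 := by
    rw [exp_neg, inv_le_iff_one_le_mul₀ (exp_pos _)]
    exact hbound
  have hlog := log_le_log (exp_pos _) hexp
  rw [log_exp] at hlog
  linarith [(le_abs_self _).trans (hD i k)]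

lemma le_div_add_of_sum_mul_le (hμ : ∀ i, 0 < μ i) {u : V → ℝ} {D K : ℝ}
    (hD : ∀ i j, |u j - u i| ≤ D) (hK : ∑ i, μ i * u i ≤ K) (j : V) :
    u j ≤ K / ∑ i, μ i + D := by
  have hM : 0 < ∑ i, μ i :=
    (hμ j).trans_le (Finset.single_le_sum (fun i _ => (hμ i).le) (Finset.mem_univ j))
  have hsum : (∑ i, μ i) * (u j - D) ≤ K := by
    refine le_trans ?_ hK
    rw [Finset.sum_mul]
    refine Finset.sum_le_sum fun i _ => mul_le_mul_of_nonneg_left ?_ (hμ i).le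
    linarith [(le_abs_self _).trans (hD i j)]
  rw [← sub_le_iff_le_add, le_div_iff₀ hM, mul_comm]
  exact hsum

lemma continuous_pEnergy (hp : 0 ≤ p) : Continuous (pEnergy p A ω) := by
  refine continuous_const.mul
    (continuous_finsetSum _ fun i _ => continuous_finsetSum _ fun j _ => ?_)
  split_ifs
  · exact continuous_const.mul (((continuous_apply j).sub (continuous_apply i)).abs.rpow_const
      fun _ => Or.inr hp)
  · exact continuous_const

lemma continuous_kwFunctional (hp : 0 ≤ p) : Continuous (kwFunctional p A ω μ c) :=
  (continuous_const.mul (continuous_pEnergy hp)).add (continuous_const.mul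
    (continuous_finsetSum _ fun i _ => continuous_const.mul (continuous_apply i)))

lemma continuous_expIntegral (μ h : V → ℝ) : Continuous (expIntegral μ h) :=
  continuous_finsetSum _ fun i _ => continuous_const.mul (continuous_apply i).rexp

lemma exists_pEnergy_le_of_kwFunctional_le (hp : 1 < p) (hω : ∀ i j, A i j → 0 < ω i j)
    (hμ : ∀ i, 0 < μ i) (hconn : ∀ i j, Relation.ReflTransGen A i j) (hc : 0 < c)
    (h : V → ℝ) (B : ℝ) :
    ∃ R, ∀ u, expIntegral μ h u = 1 → kwFunctional p A ω μ c u ≤ B → pEnergy p A ω u ≤ R := by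
  have hp₀ : 0 < p := by linarith
  obtain ⟨C, -, hosc⟩ := exists_abs_sub_le_mul_pEnergy_rpow hp₀ hω hconn
  set L := -log (∑ i, μ i * max (h i) 0)
  set M := ∑ i, μ i
  obtain ⟨R, hR⟩ := exists_le_of_le_mul_rpow_add (inv_pos.2 hp₀) (inv_lt_one_of_one_lt₀ hp)
    (p * c * M * C) (p * (B - c * M * L))
  refine ⟨R, fun u hu hJ => hR _ ?_⟩
  have hmean : M * (L - C * pEnergy p A ω u ^ p⁻¹) ≤ ∑ i, μ i * u i := by
    rw [Finset.sum_mul]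
    exact Finset.sum_le_sum fun i _ => mul_le_mul_of_nonneg_left
      (neg_log_sub_le_of_expIntegral_eq_one (fun i => (hμ i).le) hu (hosc u) i) (hμ i).le
  have hcmean := mul_le_mul_of_nonneg_left hmean hc.le
  rw [kwFunctional] at hJ
  have hscaled : p⁻¹ * pEnergy p A ω u
      ≤ B - c * M * L + c * M * C * pEnergy p A ω u ^ p⁻¹ := by linarith
  calc pEnergy p A ω u = p * (p⁻¹ * pEnergy p A ω u) := by field_simp
    _ ≤ p * (B - c * M * L + c * M * C * pEnergy p A ω u ^ p⁻¹) :=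
      mul_le_mul_of_nonneg_left hscaled hp₀.le
    _ = p * c * M * C * pEnergy p A ω u ^ p⁻¹ + p * (B - c * M * L) := by ring

lemma isCompact_kwFunctional_sublevel (hp : 1 < p) (hω : ∀ i j, A i j → 0 < ω i j)
    (hμ : ∀ i, 0 < μ i) (hconn : ∀ i j, Relation.ReflTransGen A i j) (hc : 0 < c)
    (h : V → ℝ) (B : ℝ) :
    IsCompact {u | expIntegral μ h u = 1 ∧ kwFunctional p A ω μ c u ≤ B} := by
  have hp₀ : 0 < p := by linarith
  obtain ⟨C, hC₀, hosc⟩ := exists_abs_sub_le_mul_pEnergy_rpow hp₀ hω hconn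
  obtain ⟨R, hR⟩ := exists_pEnergy_le_of_kwFunctional_le hp hω hμ hconn hc h B
  set S := C * R ^ p⁻¹
  have hoscS : ∀ u, expIntegral μ h u = 1 → kwFunctional p A ω μ c u ≤ B →
      ∀ i j, |u j - u i| ≤ S := fun u hu hJ i j =>
    (hosc u i j).trans (mul_le_mul_of_nonneg_left (rpow_le_rpow
      (pEnergy_nonneg (fun i j hij => (hω i j hij).le) u) (hR u hu hJ) (inv_pos.2 hp₀).le) hC₀)
  refine (isCompact_Icc (a := fun _ : V => -log (∑ i, μ i * max (h i) 0) - S)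
    (b := fun _ => B / c / ∑ i, μ i + S)).of_isClosed_subset ?_
    fun u ⟨hu, hJ⟩ => ⟨fun i => ?_, fun j => ?_⟩
  · exact (isClosed_eq (continuous_expIntegral μ h) continuous_const).inter
      (isClosed_le (continuous_kwFunctional hp₀.le) continuous_const)
  · exact neg_log_sub_le_of_expIntegral_eq_one (fun i => (hμ i).le) hu (hoscS u hu hJ) i
  · refine le_div_add_of_sum_mul_le hμ (hoscS u hu hJ) ?_ j
    rw [le_div_iff₀' hc]
    rw [kwFunctional] at hJ
    nlinarith [pEnergy_nonneg (p := p) (fun i j hij => (hω i j hij).le) u, inv_pos.2 hp₀]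

lemma exists_expIntegral_eq_one [DecidableEq V] (hμ : ∀ i, 0 < μ i) {h : V → ℝ}
    (hh : ∃ i, 0 < h i) : ∃ u, expIntegral μ h u = 1 := by
  obtain ⟨i, hi⟩ := hh
  have hsingle : ∀ t, expIntegral μ h (Pi.single i t)
      = μ i * h i * exp t + ∑ j ∈ Finset.univ.erase i, μ j * h j := fun t => by
    rw [expIntegral, ← Finset.add_sum_erase _ _ (Finset.mem_univ i), Pi.single_eq_same]
    congr 1
    exact Finset.sum_congr rfl fun j hj => by
      rw [Pi.single_eq_of_ne (Finset.ne_of_mem_erase hj), exp_zero, mul_one]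
  obtain ⟨t, ht⟩ := (((tendsto_exp_atTop.const_mul_atTop (mul_pos (hμ i) hi)).atTop_add
    tendsto_const_nhds).eventually_gt_atTop 0).exists
  rw [← hsingle] at ht
  refine ⟨fun j => Pi.single (M := fun _ => ℝ) i t j + -log (expIntegral μ h (Pi.single i t)), ?_⟩
  rw [expIntegral_add_const, exp_neg, exp_log ht, inv_mul_cancel₀ ht.ne']

lemma exists_isMinOn_kwFunctional (hp : 1 < p) (hω : ∀ i j, A i j → 0 < ω i j)
    (hμ : ∀ i, 0 < μ i) (hconn : ∀ i j, Relation.ReflTransGen A i j) (hc : 0 < c)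
    {h : V → ℝ} (hh : ∃ i, 0 < h i) :
    ∃ w, expIntegral μ h w = 1 ∧
      IsMinOn (kwFunctional p A ω μ c) {u | expIntegral μ h u = 1} w := by
  classical
  obtain ⟨u₀, hu₀⟩ := exists_expIntegral_eq_one hμ hh
  obtain ⟨w, ⟨hw, hwu₀⟩, hmin⟩ := (isCompact_kwFunctional_sublevel hp hω hμ hconn hc h
    (kwFunctional p A ω μ c u₀)).exists_isMinOn (f := kwFunctional p A ω μ c)
    ⟨u₀, hu₀, le_rfl⟩ (continuous_kwFunctional (by linarith)).continuousOn
  refine ⟨w, hw, isMinOn_iff.2 fun u hu => ?_⟩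
  by_cases hu₀ : kwFunctional p A ω μ c u ≤ kwFunctional p A ω μ c u₀
  · exact isMinOn_iff.1 hmin u ⟨hu, hu₀⟩
  · exact hwu₀.trans (le_of_not_ge hu₀)

lemma exists_pLap_eq_of_isMinOn (hp : 1 < p) (hA : Symmetric A) (hω : ∀ i j, ω i j = ω j i)
    (hμ : ∀ i, 0 < μ i) {h : V → ℝ} (hh : ∃ i, 0 < h i) {w : V → ℝ} (hw : expIntegral μ h w = 1)
    (hmin : IsMinOn (kwFunctional p A ω μ c) {u | expIntegral μ h u = 1} w) :
    ∃ l, ∀ k, pLap p A ω μ w k = c - l * h k * exp (w k) := by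
  classical
  have hextr : IsLocalExtrOn (kwFunctional p A ω μ c)
      {u | expIntegral μ h u = expIntegral μ h w} w := by
    rw [hw]
    exact .inl hmin.localize
  obtain ⟨a, b, hab, hlin⟩ := hextr.exists_multipliers_of_hasStrictFDerivAt_1d
    (hasStrictFDerivAt_expIntegral μ h w)
    (hasStrictFDerivAt_kwFunctional hp hA hω (fun i => (hμ i).ne') w)
  have hcoord : ∀ k, a * (μ k * h k * exp (w k)) + b * (μ k * (c - pLap p A ω μ w k)) = 0 :=
    fun k => by simpa [Pi.single_apply] using congrArg (· (Pi.single k 1)) hlin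
  have hb : b ≠ 0 := by
    rintro rfl
    obtain ⟨i, hi⟩ := hh
    have ha : a * (μ i * h i * exp (w i)) = 0 := by simpa using hcoord i
    have hpos : 0 < μ i * h i * exp (w i) := by have := hμ i; positivity
    exact hab (by simp [(mul_eq_zero.1 ha).resolve_right hpos.ne'])
  refine ⟨-a / b, fun k => ?_⟩
  have hk : μ k * (a * h k * exp (w k) + b * (c - pLap p A ω μ w k)) = 0 := by
    linear_combination hcoord k
  have hk' := (mul_eq_zero.1 hk).resolve_left (hμ k).ne'
  field_simp
  linear_combination -hk'

theorem exists_pLap_eq_of_exists_pos (hp : 1 < p) (hA : Symmetric A)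
    (hω : ∀ i j, ω i j = ω j i) (hωpos : ∀ i j, A i j → 0 < ω i j) (hμ : ∀ i, 0 < μ i)
    (hconn : ∀ i j, Relation.ReflTransGen A i j) (hc : 0 < c) {h : V → ℝ}
    (hh : ∃ i, 0 < h i) :
    ∃ u, ∀ i, pLap p A ω μ u i = c - h i * exp (u i) := by
  obtain ⟨w, hw, hmin⟩ := exists_isMinOn_kwFunctional hp hωpos hμ hconn hc hh
  obtain ⟨l, hl⟩ := exists_pLap_eq_of_isMinOn hp hA hω hμ hh hw hmin
  have hl_pos : 0 < l := by
    have hint := expIntegral_eq_of_pLap_eq (h := fun k => l * h k) hA hω (fun i => (hμ i).ne') hl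
    have hscale : expIntegral μ (fun k => l * h k) w = l * expIntegral μ h w := by
      simp only [expIntegral, Finset.mul_sum]
      exact Finset.sum_congr rfl fun _ _ => by ring
    obtain ⟨i, -⟩ := hh
    rw [hscale, hw, mul_one] at hint
    rw [hint]
    exact mul_pos hc (Finset.sum_pos (fun i _ => hμ i) ⟨i, Finset.mem_univ i⟩)
  refine ⟨fun i => w i + log l, fun i => ?_⟩
  rw [pLap_add_const, hl, exp_add, exp_log hl_pos]
  ring

end WeightedGraph

/-- for `c > 0`, `Δ_p u = c - h e^u` is solvable iff `h` is positive somewhere. -/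
theorem stmt14 {V : Type*} [Fintype V] [Nonempty V] (p : ℝ) (hp : 1 < p)
    (A : V → V → Prop) [DecidableRel A] (hA : Symmetric A)
    (ω : V → V → ℝ) (hωsymm : ∀ i j, ω i j = ω j i) (hωpos : ∀ i j, A i j → 0 < ω i j)
    (μ : V → ℝ) (hμ : ∀ i, 0 < μ i)
    (hconn : ∀ i j : V, Relation.ReflTransGen A i j) (h : V → ℝ) (c : ℝ) (hc : 0 < c) :
    (∃ u : V → ℝ, ∀ i, pLap p A ω μ u i = c - h i * Real.exp (u i)) ↔ ∃ i, 0 < h i :=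
  ⟨fun ⟨_, hu⟩ => exists_pos_of_pLap_eq hA hωsymm hμ hc hu,
    exists_pLap_eq_of_exists_pos hp hA hωsymm hωpos hμ hconn hc⟩
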